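/- Fix a real m > 0 and M > 0, and let N be a real with N ≥ M^{m+2}(m+1)^{(m+2)/m}. Set Δx = N^{−1/(m+2)}. Let u_0, w_0 : ℝ → [0,1] be nondecreasing M-Lipschitz functions with u_0(x) ≤ w_0(x) for all x. Define G^0_k = u_0(kΔx) and H^0_k = w_0(kΔx) for k ∈ ℤ, and define G^n, H^n inductively by F^{n+1}_k = F^n_k + (1/2)[(F^n_{k+1} − F^n_k)^{m+1} − (F^n_k − F^n_{k−1})^{m+1}]. Then G^n_k ≤ H^n_k for all n ∈ ℕ and k ∈ ℤ. -/

import Mathlib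

/-!
Write `φ(t) = t ^ (m + 1)` and `δ = M Δx`. Sampling a nondecreasing `M`-Lipschitz function on
the mesh gives increments in `[0, δ]`, and on `[0, δ]` the function `φ` is nondecreasing and
`L`-Lipschitz with `L = (m + 1) δ ^ m`. The condition on `N` is exactly the CFL condition
`L ≤ 1`. Under it one step of the scheme keeps all increments in `[0, δ]`, and the scheme is
monotone: `F'_k` is nondecreasing in `F_{k-1}`, `F_{k+1}` and, since `1 - L ≥ 0`, also in `F_k`.
Induction on `n` then carries `G ≤ H` through every time step.
-/

open Set

namespace PLaplaceScheme

noncomputable def schemeStep (m : ℝ) (F : ℤ → ℝ) (k : ℤ) : ℝ :=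
  F k + (1 / 2) * ((F (k + 1) - F k) ^ (m + 1) - (F k - F (k - 1)) ^ (m + 1))

def IncrementsIn (δ : ℝ) (F : ℤ → ℝ) : Prop :=
  ∀ k : ℤ, F (k + 1) - F k ∈ Icc 0 δ

variable {m δ : ℝ}

theorem rpow_add_one_sub_rpow_add_one_le {x y : ℝ} (hm : 0 ≤ m) (hy : 0 ≤ y) (hyx : y ≤ x)
    (hxδ : x ≤ δ) : x ^ (m + 1) - y ^ (m + 1) ≤ (m + 1) * δ ^ m * (x - y) := by
  have hp : 1 ≤ m + 1 := by linarith
  have hderiv : ∀ t ∈ interior (Icc 0 δ),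
      deriv (fun t : ℝ => t ^ (m + 1)) t ≤ (m + 1) * δ ^ m := by
    intro t ht
    rw [interior_Icc] at ht
    rw [Real.deriv_rpow_const, add_sub_cancel_right]
    gcongr
    exacts [ht.1.le, ht.2.le]
  exact (convex_Icc 0 δ).image_sub_le_mul_sub_of_deriv_le
    (Real.continuous_rpow_const (by linarith)).continuousOn
    (Real.differentiable_rpow_const hp).differentiableOn hderiv
    y ⟨hy, hyx.trans hxδ⟩ x ⟨hy.trans hyx, hxδ⟩ hyx

theorem rpow_add_one_sub_rpow_add_one_le_of_le_add {x y D : ℝ} (hm : 0 ≤ m) (hx : 0 ≤ x)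
    (hy : 0 ≤ y) (hxδ : x ≤ δ) (hD : 0 ≤ D) (hxy : x ≤ y + D) :
    x ^ (m + 1) - y ^ (m + 1) ≤ (m + 1) * δ ^ m * D := by
  have hL : 0 ≤ (m + 1) * δ ^ m := mul_nonneg (by linarith) (Real.rpow_nonneg (hx.trans hxδ) m)
  rcases le_total x y with hle | hle
  · have : x ^ (m + 1) ≤ y ^ (m + 1) := Real.rpow_le_rpow hx hle (by linarith)
    nlinarith
  · calc x ^ (m + 1) - y ^ (m + 1) ≤ (m + 1) * δ ^ m * (x - y) :=
          rpow_add_one_sub_rpow_add_one_le hm hy hle hxδ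
      _ ≤ (m + 1) * δ ^ m * D := by gcongr; linarith

theorem incrementsIn_sample {v : ℝ → ℝ} {M h : ℝ} (hmono : Monotone v)
    (hlip : ∀ x y : ℝ, |v x - v y| ≤ M * |x - y|) (hh : 0 ≤ h) :
    IncrementsIn (M * h) (fun k : ℤ => v (k * h)) := by
  intro k
  have hstep : ((k + 1 : ℤ) : ℝ) * h = k * h + h := by push_cast; ring
  simp only [hstep]
  refine ⟨sub_nonneg.2 (hmono (by linarith)), ?_⟩
  calc v (k * h + h) - v (k * h) ≤ |v (k * h + h) - v (k * h)| := le_abs_self _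
    _ ≤ M * |k * h + h - k * h| := hlip _ _
    _ = M * h := by rw [add_sub_cancel_left, abs_of_nonneg hh]

theorem incrementsIn_schemeStep (hm : 0 ≤ m) (hcfl : (m + 1) * δ ^ m ≤ 1) {F : ℤ → ℝ}
    (hF : IncrementsIn δ F) : IncrementsIn δ (schemeStep m F) := by
  intro k
  set a := F k - F (k - 1)
  set b := F (k + 1) - F k
  set c := F (k + 2) - F (k + 1)
  obtain ⟨ha0, haδ⟩ : a ∈ Icc 0 δ := by simpa only [sub_add_cancel] using hF (k - 1)
  obtain ⟨hb0, hbδ⟩ : b ∈ Icc 0 δ := hF k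
  obtain ⟨hc0, hcδ⟩ : c ∈ Icc 0 δ := by
    simpa only [add_assoc, one_add_one_eq_two] using hF (k + 1)
  have hstep : schemeStep m F (k + 1) - schemeStep m F k
      = b + (1 / 2) * (c ^ (m + 1) - b ^ (m + 1)) + (1 / 2) * (a ^ (m + 1) - b ^ (m + 1)) := by
    simp only [schemeStep, add_sub_cancel_right, add_assoc, one_add_one_eq_two, a, b, c]
    ring
  have hb : b ^ (m + 1) - 0 ^ (m + 1) ≤ (m + 1) * δ ^ m * b :=
    rpow_add_one_sub_rpow_add_one_le_of_le_add hm hb0 le_rfl hbδ hb0 (by linarith)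
  have hcb := rpow_add_one_sub_rpow_add_one_le_of_le_add hm hc0 hb0 hcδ (sub_nonneg.2 hbδ)
    (show c ≤ b + (δ - b) by linarith)
  have hab := rpow_add_one_sub_rpow_add_one_le_of_le_add hm ha0 hb0 haδ (sub_nonneg.2 hbδ)
    (show a ≤ b + (δ - b) by linarith)
  rw [Real.zero_rpow (by linarith)] at hb
  have hLb := mul_le_mul_of_nonneg_right hcfl hb0
  have hLδb := mul_le_mul_of_nonneg_right hcfl (sub_nonneg.2 hbδ)
  have ha := Real.rpow_nonneg ha0 (m + 1)
  have hc := Real.rpow_nonneg hc0 (m + 1)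
  rw [hstep]
  constructor <;> linarith

theorem schemeStep_le_schemeStep (hm : 0 ≤ m) (hcfl : (m + 1) * δ ^ m ≤ 1) {F E : ℤ → ℝ}
    (hF : IncrementsIn δ F) (hE : IncrementsIn δ E) (hFE : ∀ k, F k ≤ E k) (k : ℤ) :
    schemeStep m F k ≤ schemeStep m E k := by
  obtain ⟨hFl0, hFlδ⟩ : F k - F (k - 1) ∈ Icc 0 δ := by
    simpa only [sub_add_cancel] using hF (k - 1)
  obtain ⟨hEl0, hElδ⟩ : E k - E (k - 1) ∈ Icc 0 δ := by
    simpa only [sub_add_cancel] using hE (k - 1)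
  obtain ⟨hFr0, hFrδ⟩ := hF k
  obtain ⟨hEr0, hErδ⟩ := hE k
  have hD : 0 ≤ E k - F k := sub_nonneg.2 (hFE k)
  have hright := rpow_add_one_sub_rpow_add_one_le_of_le_add hm hFr0 hEr0 hFrδ hD
    (show F (k + 1) - F k ≤ E (k + 1) - E k + (E k - F k) by linarith [hFE (k + 1)])
  have hleft := rpow_add_one_sub_rpow_add_one_le_of_le_add hm hEl0 hFl0 hElδ hD
    (show E k - E (k - 1) ≤ F k - F (k - 1) + (E k - F k) by linarith [hFE (k - 1)])
  have hLD := mul_le_mul_of_nonneg_right hcfl hD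
  simp only [schemeStep]
  linarith

theorem incrementsIn_of_iterate (hm : 0 ≤ m) (hcfl : (m + 1) * δ ^ m ≤ 1) {F : ℕ → ℤ → ℝ}
    (hrec : ∀ n, F (n + 1) = schemeStep m (F n)) (h0 : IncrementsIn δ (F 0)) (n : ℕ) :
    IncrementsIn δ (F n) := by
  induction n with
  | zero => exact h0
  | succ n ih => rw [hrec n]; exact incrementsIn_schemeStep hm hcfl ih

theorem cfl_condition_of_le {M N : ℝ} (hm : 0 < m) (hM : 0 < M)
    (hN : M ^ (m + 2) * (m + 1) ^ ((m + 2) / m) ≤ N) :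
    (m + 1) * (M * N ^ (-(1 / (m + 2)) : ℝ)) ^ m ≤ 1 := by
  set q : ℝ := m / (m + 2)
  have hA : 0 < M ^ (m + 2) * (m + 1) ^ ((m + 2) / m) := by positivity
  have hN0 : 0 < N := hA.trans_le hN
  have hAq : (M ^ (m + 2) * (m + 1) ^ ((m + 2) / m)) ^ q = (m + 1) * M ^ m := by
    rw [Real.mul_rpow (by positivity) (by positivity), ← Real.rpow_mul hM.le,
      ← Real.rpow_mul (by linarith), show (m + 2) * q = m by simp only [q]; field_simp,
      show (m + 2) / m * q = 1 by simp only [q]; field_simp, Real.rpow_one, mul_comm]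
  have hδ : (M * N ^ (-(1 / (m + 2)) : ℝ)) ^ m = M ^ m / N ^ q := by
    rw [Real.mul_rpow hM.le (by positivity), ← Real.rpow_mul hN0.le,
      show -(1 / (m + 2)) * m = -q by ring, Real.rpow_neg hN0.le, div_eq_mul_inv]
  have hNq : (m + 1) * M ^ m ≤ N ^ q := hAq ▸ Real.rpow_le_rpow hA.le hN (by positivity)
  rw [hδ, ← mul_div_assoc, div_le_one (by positivity)]
  exact hNq

end PLaplaceScheme

open PLaplaceScheme in
theorem statement6 (m M N : ℝ) (hm : 0 < m) (hM : 0 < M)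
    (hN : M ^ (m + 2) * (m + 1) ^ ((m + 2) / m) ≤ N)
    (u0 w0 : ℝ → ℝ)
    (hu0mono : Monotone u0) (hw0mono : Monotone w0)
    (hu0lip : ∀ x y : ℝ, |u0 x - u0 y| ≤ M * |x - y|)
    (hw0lip : ∀ x y : ℝ, |w0 x - w0 y| ≤ M * |x - y|)
    (hle : ∀ x : ℝ, u0 x ≤ w0 x)
    (G H : ℕ → ℤ → ℝ)
    (hG0 : ∀ k : ℤ, G 0 k = u0 ((k : ℝ) * N ^ (-(1 / (m + 2)) : ℝ)))
    (hH0 : ∀ k : ℤ, H 0 k = w0 ((k : ℝ) * N ^ (-(1 / (m + 2)) : ℝ)))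
    (hGrec : ∀ (n : ℕ) (k : ℤ),
      G (n + 1) k = G n k + (1 / 2) * ((G n (k + 1) - G n k) ^ (m + 1) - (G n k - G n (k - 1)) ^ (m + 1)))
    (hHrec : ∀ (n : ℕ) (k : ℤ),
      H (n + 1) k = H n k + (1 / 2) * ((H n (k + 1) - H n k) ^ (m + 1) - (H n k - H n (k - 1)) ^ (m + 1))) :
    ∀ (n : ℕ) (k : ℤ), G n k ≤ H n k := by
  have hcfl := cfl_condition_of_le hm hM hN
  have hΔx : 0 ≤ N ^ (-(1 / (m + 2)) : ℝ) := 
    Real.rpow_nonneg ((by positivity : (0 : ℝ) ≤ _).trans hN) _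
  have hG : ∀ n, IncrementsIn _ (G n) := incrementsIn_of_iterate hm.le hcfl
    (fun n => funext (hGrec n)) (funext hG0 ▸ incrementsIn_sample hu0mono hu0lip hΔx)
  have hH : ∀ n, IncrementsIn _ (H n) := incrementsIn_of_iterate hm.le hcfl
    (fun n => funext (hHrec n)) (funext hH0 ▸ incrementsIn_sample hw0mono hw0lip hΔx)
  intro n
  induction n with
  | zero => intro k; rw [hG0, hH0]; exact hle _
  | succ n ih =>
    intro k
    rw [hGrec, hHrec]
    exact schemeStep_le_schemeStep hm.le hcfl (hG n) (hH n) ih k
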